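/- arXiv:2109.07052 — 4 statements merged into one kernel-verified Lean document; each statement's English description precedes it below -/
import Mathlib

section
/- Let $X = \{x_1,\dots,x_m\} \subseteq H_n$ be a finite subset of the Hamming cube, let $h = (1/2,\dots,1/2) \in \mathbb{R}^n$, and let $\alpha_1,\dots,\alpha_m$ be reals with $\sum_i \alpha_i = 1$. Then $\sum_{i,j=1}^m \alpha_i \alpha_j \|x_i - x_j\|_1 = \frac{n}{2} - 2 \|\sum_{i=1}^m \alpha_i x_i - h\|_2^2$. -/
/-!
Coordinatewise, `|a - b| = a + b - 2ab` for `a, b ∈ {0, 1}`, so with `s = ∑ᵢ αᵢ yᵢ` and `∑ᵢ αᵢ = 1`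
the weighted distance sum collapses to `2s - 2s² = 1/2 - 2(s - 1/2)²`; summing over the `n`
coordinates gives `n/2 - 2‖∑ᵢ αᵢ xᵢ - h‖²`.
-/

open Finset

lemma abs_sub_eq_of_mem_zero_one {a b : ℝ} (ha : a = 0 ∨ a = 1) (hb : b = 0 ∨ b = 1) :
    |a - b| = a + b - 2 * (a * b) := by
  rcases ha with rfl | rfl <;> rcases hb with rfl | rfl <;> norm_num

lemma sum_sum_mul_mul_abs_sub_of_mem_zero_one {ι : Type*} [Fintype ι] (α y : ι → ℝ)
    (hα : ∑ i, α i = 1) (hy : ∀ i, y i = 0 ∨ y i = 1) :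
    ∑ i, ∑ j, α i * α j * |y i - y j| = 1 / 2 - 2 * (∑ i, α i * y i - 1 / 2) ^ 2 := by
  have hexpand : ∀ i j, α i * α j * |y i - y j| =
      α i * y i * α j + α i * (α j * y j) - 2 * (α i * y i * (α j * y j)) := fun i j => by
    rw [abs_sub_eq_of_mem_zero_one (hy i) (hy j)]; ring
  simp only [hexpand, sum_sub_distrib, sum_add_distrib, ← sum_mul, ← mul_sum, hα]
  ring

lemma EuclideanSpace.norm_sub_sq_of_forall_eq_const {ι : Type*} [Fintype ι]
    (v h : EuclideanSpace ℝ ι) {c : ℝ} (hh : ∀ t, h t = c) :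
    ‖v - h‖ ^ 2 = ∑ t, (v t - c) ^ 2 := by
  simp [EuclideanSpace.norm_sq_eq, hh]

theorem stmt_5 {m n : ℕ} (x : Fin m → EuclideanSpace ℝ (Fin n))
    (hx : ∀ i j, x i j = 0 ∨ x i j = 1)
    (h : EuclideanSpace ℝ (Fin n)) (hh : ∀ j, h j = 1 / 2)
    (α : Fin m → ℝ) (hα : ∑ i, α i = 1) :
    ∑ i, ∑ j, α i * α j * (∑ t, |x i t - x j t|) =
      n / 2 - 2 * ‖(∑ i, α i • x i) - h‖ ^ 2 := by
  have hcoord : ∀ t, (∑ i, α i • x i) t = ∑ i, α i * x i t := fun t => by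
    simp [WithLp.ofLp_sum, Finset.sum_apply]
  calc ∑ i, ∑ j, α i * α j * (∑ t, |x i t - x j t|)
      = ∑ t, ∑ i, ∑ j, α i * α j * |x i t - x j t| := by
        simp only [mul_sum]
        exact (sum_congr rfl fun _ _ => sum_comm).trans sum_comm
    _ = ∑ t, ((1 : ℝ) / 2 - 2 * (∑ i, α i * x i t - 1 / 2) ^ 2) :=
        sum_congr rfl fun t _ =>
          sum_sum_mul_mul_abs_sub_of_mem_zero_one α (x · t) hα fun i => hx i t
    _ = n / 2 - 2 * ‖(∑ i, α i • x i) - h‖ ^ 2 := by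
        simp [EuclideanSpace.norm_sub_sq_of_forall_eq_const _ h hh, hcoord, sum_sub_distrib,
          mul_sum]
        ring
end

section
/- Let $X = \{x_1,\dots,x_m\} \subseteq H_n$ and let $h = (1/2,\dots,1/2) \in \mathbb{R}^n$. Then $M(X) = \frac{n}{2} - 2\, d_2(h, Z_X)^2$, where $M(X) = \sup\{\sum_{i,j} \alpha_i \alpha_j d_1(x_i,x_j) : \sum_i \alpha_i = 1\}$, $Z_X$ is the affine hull of $\{x_1,\dots,x_m\}$ in $\mathbb{R}^n$, and $d_2(h, Z_X)$ is the Euclidean distance from $h$ to $Z_X$. -/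
/-! On `{0,1}` we have `|a - b| = a + b - 2ab`, so in each coordinate `t` the quadratic form
`∑ αᵢ αⱼ |xᵢₜ - xⱼₜ|` depends only on the mean `pₜ = ∑ αᵢ xᵢₜ` and equals `1/2 - 2 (pₜ - 1/2)²`.
Summing over coordinates, the form at weights `α` is `n/2 - 2 ‖h - p‖²` with `p` the affine
combination of the points with weights `α`. Maximising over `α` thus means minimising the distance
from `h` to a point of the affine hull, and this minimum is attained since the hull is closed in
finite dimension. -/

open Finset

lemma sum_mul_mul_abs_sub_of_mem_zero_one {ι : Type*} [Fintype ι] (α a : ι → ℝ)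
    (hα : ∑ i, α i = 1) (ha : ∀ i, a i = 0 ∨ a i = 1) :
    ∑ i, ∑ j, α i * α j * |a i - a j| = 1 / 2 - 2 * (∑ i, α i * a i - 1 / 2) ^ 2 := by
  have hterm : ∀ i j, α i * α j * |a i - a j| =
      α i * a i * α j + α i * (α j * a j) - 2 * ((α i * a i) * (α j * a j)) := fun i j => by
    rw [abs_sub_eq_of_mem_zero_one (ha i) (ha j)]; ring
  simp only [hterm, sum_sub_distrib, sum_add_distrib, ← sum_mul, ← mul_sum, hα]
  ring

lemma EuclideanSpace.affineCombination_apply {ι κ : Type*} [Fintype ι] [Fintype κ]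
    (x : ι → EuclideanSpace ℝ κ) {α : ι → ℝ} (hα : ∑ i, α i = 1) (t : κ) :
    univ.affineCombination ℝ x α t = ∑ i, α i * x i t := by
  rw [affineCombination_eq_linear_combination _ _ _ hα, WithLp.ofLp_sum, Finset.sum_apply]
  simp [smul_eq_mul]

lemma EuclideanSpace.dist_sq_eq_sum {κ : Type*} [Fintype κ] (x y : EuclideanSpace ℝ κ) :
    dist x y ^ 2 = ∑ t, (x t - y t) ^ 2 := by
  rw [EuclideanSpace.dist_eq, Real.sq_sqrt (by positivity)]
  simp only [Real.dist_eq, sq_abs]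

lemma sum_mul_mul_hamming_eq {ι κ : Type*} [Fintype ι] [Fintype κ] (x : ι → EuclideanSpace ℝ κ)
    (hx : ∀ i t, x i t = 0 ∨ x i t = 1) (h : EuclideanSpace ℝ κ) (hh : ∀ t, h t = 1 / 2)
    {α : ι → ℝ} (hα : ∑ i, α i = 1) :
    ∑ i, ∑ j, α i * α j * (∑ t, |x i t - x j t|)
      = Fintype.card κ / 2 - 2 * dist h (univ.affineCombination ℝ x α) ^ 2 := by
  have hcoord : ∀ t, ∑ i, ∑ j, α i * α j * |x i t - x j t|
      = 1 / 2 - 2 * (h t - univ.affineCombination ℝ x α t) ^ 2 := fun t => by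
    rw [EuclideanSpace.affineCombination_apply x hα, hh,
      sum_mul_mul_abs_sub_of_mem_zero_one α (x · t) hα (hx · t)]
    ring
  simp only [mul_sum]
  rw [sum_comm_cycle, EuclideanSpace.dist_sq_eq_sum]
  simp only [hcoord, sum_sub_distrib, ← mul_sum, sum_const, card_univ, nsmul_eq_mul]
  ring

lemma exists_affineCombination_dist_eq_infDist_affineSpan {ι V : Type*} [Fintype ι] [Nonempty ι]
    [NormedAddCommGroup V] [NormedSpace ℝ V] [FiniteDimensional ℝ V] (x : ι → V) (q : V) :
    ∃ α : ι → ℝ, ∑ i, α i = 1 ∧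
      dist q (univ.affineCombination ℝ x α) = Metric.infDist q (affineSpan ℝ (Set.range x)) := by
  have hne : (affineSpan ℝ (Set.range x) : Set V).Nonempty :=
    (Set.range_nonempty x).mono (subset_affineSpan ℝ _)
  obtain ⟨y, hy, hdist⟩ :=
    (AffineSubspace.closed_of_finiteDimensional _).exists_infDist_eq_dist hne q
  obtain ⟨α, hα, rfl⟩ := eq_affineCombination_of_mem_affineSpan_of_fintype hy
  exact ⟨α, hα, hdist.symm⟩

theorem stmt_7 {m n : ℕ} (hm : 0 < m) (x : Fin m → EuclideanSpace ℝ (Fin n))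
    (hx : ∀ i j, x i j = 0 ∨ x i j = 1)
    (h : EuclideanSpace ℝ (Fin n)) (hh : ∀ j, h j = 1 / 2) :
    sSup {v : ℝ | ∃ α : Fin m → ℝ, ∑ i, α i = 1 ∧
        v = ∑ i, ∑ j, α i * α j * (∑ t, |x i t - x j t|)} =
      n / 2 - 2 * (Metric.infDist h (affineSpan ℝ (Set.range x) : Set (EuclideanSpace ℝ (Fin n)))) ^ 2 := by
  have : Nonempty (Fin m) := ⟨⟨0, hm⟩⟩
  have hform : ∀ α : Fin m → ℝ, ∑ i, α i = 1 → ∑ i, ∑ j, α i * α j * (∑ t, |x i t - x j t|)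
      = n / 2 - 2 * dist h (univ.affineCombination ℝ x α) ^ 2 := fun α hα => by
    rw [sum_mul_mul_hamming_eq x hx h hh hα, Fintype.card_fin]
  refine IsGreatest.csSup_eq ⟨?_, ?_⟩
  · obtain ⟨α, hα, hmin⟩ := exists_affineCombination_dist_eq_infDist_affineSpan x h
    exact ⟨α, hα, by rw [hform α hα, hmin]⟩
  · rintro v ⟨α, hα, rfl⟩
    rw [hform α hα]
    have hle := Metric.infDist_le_dist_of_mem (x := h) (affineCombination_mem_affineSpan hα x)
    have := pow_le_pow_left₀ Metric.infDist_nonneg hle 2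
    linarith
end

section
/- Let $X = \{x_1,\dots,x_m\} \subseteq H_n$ ($m \ge 2$) be affinely independent with distance matrix $D = (d_1(x_i,x_j))_{i,j}$. Then $\langle D^{-1}\mathbf{1}, \mathbf{1}\rangle = \left(\frac{n}{2} - 2\, d_2(h, Z_X)^2\right)^{-1}$, where $h = (1/2,\dots,1/2)$, $Z_X$ is the affine hull of $X$ in $\mathbb{R}^n$, and $\mathbf{1} = (1,\dots,1)^T$. -/
/-!
Every vertex of the cube lies on the sphere of squared radius `n / 4` about `h`, so by Pythagoras
all `x i` lie on a sphere of squared radius `r² = n / 4 - d₂(h, Z_X)²` centred at the orthogonal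
projection `q` of `h` onto `Z_X`. On the cube the Hamming distance is the squared Euclidean
distance, so `D i j = 2 r² - 2 ⟪x i - q, x j - q⟫`. If `D w = β 𝟙`, then
`⟪x i - q, ∑ j, w j • (x j - q)⟫` does not depend on `i`; hence this vector of the direction of
`Z_X` is orthogonal to that direction, so it vanishes and `2 r² ∑ w = β`. With `β = 0` affine
independence makes `D` invertible, and `β = 1` gives `∑ D⁻¹ = (2 r²)⁻¹`.
-/

open Finset Matrix
open scoped RealInnerProductSpace

section HammingCube

variable {n : ℕ}

lemma sum_abs_sub_eq_dist_sq_of_binary {x y : EuclideanSpace ℝ (Fin n)}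
    (hx : ∀ t, x t = 0 ∨ x t = 1) (hy : ∀ t, y t = 0 ∨ y t = 1) :
    ∑ t, |x t - y t| = dist x y ^ 2 := by
  rw [EuclideanSpace.dist_sq_eq]
  refine sum_congr rfl fun t _ => ?_
  rw [Real.dist_eq, sq_abs]
  rcases hx t with hxt | hxt <;> rcases hy t with hyt | hyt <;> norm_num [hxt, hyt]

lemma dist_sq_eq_of_binary_of_half {x h : EuclideanSpace ℝ (Fin n)}
    (hx : ∀ t, x t = 0 ∨ x t = 1) (hh : ∀ t, h t = 1 / 2) :
    dist x h ^ 2 = n / 4 := by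
  have hcoord : ∀ t, dist (x t) (h t) ^ 2 = 1 / 4 := fun t => by
    rw [Real.dist_eq, sq_abs, hh t]
    rcases hx t with hxt | hxt <;> norm_num [hxt]
  rw [EuclideanSpace.dist_sq_eq, sum_congr rfl fun t _ => hcoord t]
  simp [div_eq_mul_inv]

end HammingCube

section CosphericalFamily

variable {V : Type*} [NormedAddCommGroup V] [InnerProductSpace ℝ V]
  {ι : Type*} {x : ι → V} {q : V} {r : ℝ}

def sqDistMatrix (x : ι → V) : Matrix ι ι ℝ := Matrix.of fun i j => dist (x i) (x j) ^ 2

lemma dist_sq_eq_of_dist_eq (hr : ∀ i, dist (x i) q = r) (i j : ι) :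
    dist (x i) (x j) ^ 2 = 2 * r ^ 2 - 2 * ⟪x i - q, x j - q⟫ := by
  have hnorm : ∀ k, ‖x k - q‖ = r := fun k => by rw [← dist_eq_norm, hr]
  rw [dist_eq_norm, ← sub_sub_sub_cancel_right (x i) (x j) q, norm_sub_sq_real, hnorm, hnorm]
  ring

variable [Fintype ι]

lemma inner_sum_smul_sub_eq (hr : ∀ i, dist (x i) q = r) {w : ι → ℝ} {β : ℝ}
    (hw : ∀ i, (sqDistMatrix x *ᵥ w) i = β) (i : ι) :
    ⟪x i - q, ∑ j, w j • (x j - q)⟫ = (2 * r ^ 2 * ∑ j, w j - β) / 2 := by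
  have hβ := hw i
  simp only [mulVec, dotProduct, sqDistMatrix, of_apply, dist_sq_eq_of_dist_eq hr i,
    sub_mul, sum_sub_distrib, mul_assoc, ← mul_sum] at hβ
  simp only [inner_sum, real_inner_smul_right, mul_comm (w _)] at hβ ⊢
  linarith

lemma sum_smul_sub_eq_zero_of_mulVec_sqDistMatrix_eq_const
    (hq : q ∈ affineSpan ℝ (Set.range x)) (hr : ∀ i, dist (x i) q = r) {w : ι → ℝ} {β : ℝ}
    (hw : ∀ i, (sqDistMatrix x *ᵥ w) i = β) :
    ∑ j, w j • (x j - q) = 0 := by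
  set v := ∑ j, w j • (x j - q)
  have hv_mem : v ∈ (affineSpan ℝ (Set.range x)).direction :=
    Submodule.sum_mem _ fun j _ => Submodule.smul_mem _ _
      (AffineSubspace.vsub_mem_direction (mem_affineSpan ℝ (Set.mem_range_self j)) hq)
  have hdir_perp : (affineSpan ℝ (Set.range x)).direction ≤ (ℝ ∙ v)ᗮ := by
    rw [direction_affineSpan, vectorSpan_def, Submodule.span_le]
    rintro _ ⟨_, ⟨i, rfl⟩, _, ⟨j, rfl⟩, rfl⟩
    rw [SetLike.mem_coe, Submodule.mem_orthogonal_singleton_iff_inner_left]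
    change ⟪x i - x j, v⟫ = 0
    rw [← sub_sub_sub_cancel_right (x i) (x j) q, inner_sub_left,
      inner_sum_smul_sub_eq hr hw, inner_sum_smul_sub_eq hr hw, sub_self]
  exact inner_self_eq_zero.mp (Submodule.mem_orthogonal_singleton_iff_inner_left.mp
    (hdir_perp hv_mem))

lemma two_mul_sq_mul_sum_eq_of_mulVec_sqDistMatrix_eq_const
    (hq : q ∈ affineSpan ℝ (Set.range x)) (hr : ∀ i, dist (x i) q = r) {w : ι → ℝ} {β : ℝ}
    (hw : ∀ i, (sqDistMatrix x *ᵥ w) i = β) :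
    2 * r ^ 2 * ∑ j, w j = β := by
  obtain ⟨_, i, rfl⟩ := (affineSpan_nonempty (k := ℝ)).mp ⟨q, hq⟩
  have hi := inner_sum_smul_sub_eq hr hw i
  rw [sum_smul_sub_eq_zero_of_mulVec_sqDistMatrix_eq_const hq hr hw, inner_zero_right] at hi
  linarith

lemma det_sqDistMatrix_ne_zero [DecidableEq ι] (hind : AffineIndependent ℝ x)
    (hq : q ∈ affineSpan ℝ (Set.range x)) (hr : ∀ i, dist (x i) q = r) (hr₀ : r ≠ 0) :
    (sqDistMatrix x).det ≠ 0 := by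
  intro hdet
  obtain ⟨w, hw_ne, hw⟩ := exists_mulVec_eq_zero_iff.mpr hdet
  have hw' : ∀ i, (sqDistMatrix x *ᵥ w) i = 0 := by simp [hw]
  have hsum : ∑ j, w j = 0 := by
    simpa [hr₀] using two_mul_sq_mul_sum_eq_of_mulVec_sqDistMatrix_eq_const hq hr hw'
  have hcomb : ∑ j, w j • x j = 0 := by
    simpa [smul_sub, sum_sub_distrib, ← sum_smul, hsum] using
      sum_smul_sub_eq_zero_of_mulVec_sqDistMatrix_eq_const hq hr hw'
  exact hw_ne (funext fun i => hind.eq_zero_of_sum_eq_zero hsum hcomb i (mem_univ i))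

lemma sum_inv_sqDistMatrix [DecidableEq ι] [Nontrivial ι] (hind : AffineIndependent ℝ x)
    (hq : q ∈ affineSpan ℝ (Set.range x)) (hr : ∀ i, dist (x i) q = r) :
    ∑ i, ∑ j, (sqDistMatrix x)⁻¹ i j = (2 * r ^ 2)⁻¹ := by
  have hr₀ : r ≠ 0 := by
    rintro rfl
    obtain ⟨i, j, hij⟩ := exists_pair_ne ι
    exact hij <| hind.injective <|
      dist_le_zero.mp ((dist_triangle_right _ _ q).trans (by simp [hr]))
  set w := (sqDistMatrix x)⁻¹ *ᵥ 1
  have hw : ∀ i, (sqDistMatrix x *ᵥ w) i = 1 := by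
    simp [w, mulVec_mulVec,
      mul_nonsing_inv _ (isUnit_iff_ne_zero.mpr (det_sqDistMatrix_ne_zero hind hq hr hr₀))]
  have hsum := two_mul_sq_mul_sum_eq_of_mulVec_sqDistMatrix_eq_const hq hr hw
  rw [← eq_inv_of_mul_eq_one_right hsum]
  simp [w, mulVec, dotProduct]

end CosphericalFamily

theorem stmt_9 {m n : ℕ} (hm : 2 ≤ m) (x : Fin m → EuclideanSpace ℝ (Fin n))
    (hx : ∀ i j, x i j = 0 ∨ x i j = 1)
    (hind : AffineIndependent ℝ x)
    (h : EuclideanSpace ℝ (Fin n)) (hh : ∀ j, h j = 1 / 2)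
    (D : Matrix (Fin m) (Fin m) ℝ) (hD : ∀ i j, D i j = ∑ t, |x i t - x j t|) :
    ∑ i, ∑ j, D⁻¹ i j =
      (n / 2 - 2 * (Metric.infDist h
        (affineSpan ℝ (Set.range x) : Set (EuclideanSpace ℝ (Fin n)))) ^ 2)⁻¹ := by
  have : Nontrivial (Fin m) := Fin.nontrivial_iff_two_le.mpr hm
  set S := affineSpan ℝ (Set.range x)
  have hxS : ∀ i, x i ∈ S := fun i => mem_affineSpan ℝ (Set.mem_range_self i)
  have : Nonempty S := ⟨⟨_, hxS ⟨0, by omega⟩⟩⟩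
  set q := EuclideanGeometry.orthogonalProjection S h
  have hxq : ∀ i, dist (x i) q ^ 2 = n / 4 - dist h q ^ 2 := fun i => by
    rw [← dist_sq_eq_of_binary_of_half (hx i) hh, sq, sq, sq,
      EuclideanGeometry.dist_sq_eq_dist_orthogonalProjection_sq_add_dist_orthogonalProjection_sq
        h (hxS i)]
    ring
  set r := √(n / 4 - dist h q ^ 2) with hr_def
  have hr : ∀ i, dist (x i) q = r := fun i => by rw [hr_def, ← hxq i, Real.sqrt_sq dist_nonneg]
  have hD' : D = sqDistMatrix x :=
    Matrix.ext fun i j => by rw [hD, sum_abs_sub_eq_dist_sq_of_binary (hx i) (hx j)]; rfl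
  rw [hD', sum_inv_sqDistMatrix hind q.2 hr,
    ← EuclideanGeometry.dist_orthogonalProjection_eq_infDist,
    Real.sq_sqrt (hxq ⟨0, by omega⟩ ▸ sq_nonneg _)]
  ring
end

section
/- Let $X = \{x_1,\dots,x_m\}$ be a finite metric space with distance matrix $D$, admitting an S-embedding $\iota: X \to \mathbb{R}^n$ (i.e., $\|\iota(x)-\iota(y)\|_2^2 = d(x,y)$). Suppose $\iota(X)$ lies on a sphere of radius $r$ whose centre $c$ lies in the affine hull of $\iota(X)$, say $c = \sum_i \beta_i \iota(x_i)$ with $\sum_i \beta_i = 1$. Then for the measure $\mu = (\beta_1,\dots,\beta_m)$ and every $\alpha = (\alpha_1,\dots,\alpha_m)$ with $\sum_i \alpha_i = 1$, one has $\langle D\alpha, \alpha \rangle \le \langle D\mu, \mu\rangle = 2r^2$. -/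
/-!
For weights with `∑ α = 1`, expanding `‖uᵢ - uⱼ‖² = ‖uᵢ‖² + ‖uⱼ‖² - 2⟪uᵢ, uⱼ⟫` gives the
variance identity `∑ᵢⱼ αᵢαⱼ‖uᵢ - uⱼ‖² = 2∑ᵢ αᵢ‖uᵢ‖² - 2‖∑ᵢ αᵢuᵢ‖²`. Centring at `c`, when all
points lie on the sphere of radius `r` about `c` this is `2r² - 2‖∑ᵢ αᵢvᵢ - c‖²`, which is at
most `2r²`, with equality for the weights `β` whose barycentre is `c`.
-/

open Finset RealInnerProductSpace

section

variable {ι E : Type*} [Fintype ι] [NormedAddCommGroup E] [InnerProductSpace ℝ E]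

lemma norm_sum_smul_sq (α : ι → ℝ) (u : ι → E) :
    ‖∑ i, α i • u i‖ ^ 2 = ∑ i, ∑ j, α i * α j * ⟪u i, u j⟫ := by
  rw [← real_inner_self_eq_norm_sq, sum_inner]
  refine sum_congr rfl fun i _ => ?_
  rw [inner_sum]
  refine sum_congr rfl fun j _ => ?_
  rw [real_inner_smul_left, real_inner_smul_right, mul_assoc]

lemma sum_sum_mul_norm_sub_sq (α : ι → ℝ) (hα : ∑ i, α i = 1) (u : ι → E) :
    ∑ i, ∑ j, α i * α j * ‖u i - u j‖ ^ 2
      = 2 * ∑ i, α i * ‖u i‖ ^ 2 - 2 * ‖∑ i, α i • u i‖ ^ 2 := by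
  have hleft : ∑ i, ∑ j, α i * α j * ‖u i‖ ^ 2 = ∑ i, α i * ‖u i‖ ^ 2 := by
    simp only [mul_right_comm _ (α _), ← mul_sum, hα, mul_one]
  have hright : ∑ i, ∑ j, α i * α j * ‖u j‖ ^ 2 = ∑ j, α j * ‖u j‖ ^ 2 := by
    rw [sum_comm]
    simp only [mul_comm (α _) (α _), hleft]
  calc ∑ i, ∑ j, α i * α j * ‖u i - u j‖ ^ 2
      = ∑ i, ∑ j, (α i * α j * ‖u i‖ ^ 2 + α i * α j * ‖u j‖ ^ 2
          - 2 * (α i * α j * ⟪u i, u j⟫)) := by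
        refine sum_congr rfl fun i _ => sum_congr rfl fun j _ => ?_
        rw [norm_sub_sq_real]; ring
    _ = 2 * ∑ i, α i * ‖u i‖ ^ 2 - 2 * ‖∑ i, α i • u i‖ ^ 2 := by
        simp only [sum_sub_distrib, sum_add_distrib, ← mul_sum, hleft, hright, norm_sum_smul_sq]
        ring

lemma sum_sum_mul_norm_sub_sq_of_norm_sub_eq (α : ι → ℝ) (hα : ∑ i, α i = 1) (v : ι → E)
    {c : E} {r : ℝ} (hr : ∀ i, ‖v i - c‖ = r) :
    ∑ i, ∑ j, α i * α j * ‖v i - v j‖ ^ 2 = 2 * r ^ 2 - 2 * ‖∑ i, α i • v i - c‖ ^ 2 := by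
  have hbary : ∑ i, α i • v i - c = ∑ i, α i • (v i - c) := by
    simp only [smul_sub, sum_sub_distrib, ← sum_smul, hα, one_smul]
  simpa only [sub_sub_sub_cancel_right, hr, ← sum_mul, hα, one_mul, ← hbary]
    using sum_sum_mul_norm_sub_sq α hα (fun i => v i - c)

end

theorem stmt_17_general {m n : ℕ} {X : Type*} [MetricSpace X]
    (ι : X → EuclideanSpace ℝ (Fin n))
    (hι : ∀ a b : X, ‖ι a - ι b‖ ^ 2 = dist a b)
    (x : Fin m → X) (β : Fin m → ℝ) (hβ : ∑ i, β i = 1)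
    (r : ℝ) (hr : ∀ i, ‖ι (x i) - ∑ j, β j • ι (x j)‖ = r)
    (α : Fin m → ℝ) (hα : ∑ i, α i = 1) :
    ∑ i, ∑ j, α i * α j * dist (x i) (x j) ≤
        ∑ i, ∑ j, β i * β j * dist (x i) (x j) ∧
      ∑ i, ∑ j, β i * β j * dist (x i) (x j) = 2 * r ^ 2 := by
  have hsphere (γ : Fin m → ℝ) (hγ : ∑ i, γ i = 1) :=
    sum_sum_mul_norm_sub_sq_of_norm_sub_eq γ hγ (fun i => ι (x i)) hr
  simp only [← hι, hsphere α hα, hsphere β hβ, sub_self, norm_zero,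
    zero_pow two_ne_zero, mul_zero, sub_zero, and_true]
  exact sub_le_self _ (by positivity)

theorem stmt_17 {m n : ℕ} {X : Type*} [MetricSpace X] [Fintype X]
    (ι : X → EuclideanSpace ℝ (Fin n))
    (hι : ∀ a b : X, ‖ι a - ι b‖ ^ 2 = dist a b)
    (x : Fin m → X) (β : Fin m → ℝ) (hβ : ∑ i, β i = 1)
    (r : ℝ) (hr : ∀ i, ‖ι (x i) - ∑ j, β j • ι (x j)‖ = r)
    (α : Fin m → ℝ) (hα : ∑ i, α i = 1) :
    ∑ i, ∑ j, α i * α j * dist (x i) (x j) ≤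
        ∑ i, ∑ j, β i * β j * dist (x i) (x j) ∧
      ∑ i, ∑ j, β i * β j * dist (x i) (x j) = 2 * r ^ 2 :=
  stmt_17_general ι hι x β hβ r hr α hα
end
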